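/- arXiv:1303.5588 — 3 statements merged into one kernel-verified Lean document; each statement's English description precedes it below -/
import Mathlib

section
/- Let ρ: ℝ → ℝ be a symmetric (even), convex, coercive, differentiable function, and define the density p(x) = exp(-ρ(x)). Suppose t₀ ∈ ℝ satisfies ρ'(t₀) = α₀ > 0. Then for all t₂ > t₁ ≥ t₀, the conditional tail probability satisfies P(|y| > t₂ | |y| > t₁) ≤ exp(-α₀(t₂ - t₁)), where probability is computed with respect to the (unnormalized) measure with density p. -/
/-!
To the right of `t₀` a convex `ρ` grows at least at rate `α₀ = ρ'(t₀)`, so translating the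
right tail from `t₁` to `t₂` multiplies `exp (-ρ)` pointwise by at most `exp (-α₀ (t₂ - t₁))`;
the same growth makes the tails integrable. By evenness each two-sided tail is twice the right
one, and evenness together with `ρ'(t₀) > 0` forces `t₀ ≥ 0`, which is what makes that
reduction valid.
-/

open MeasureTheory Filter Set

theorem setIntegral_Ioi_comp_add_right {E : Type*} [NormedAddCommGroup E] [NormedSpace ℝ E]
    (f : ℝ → E) (c d : ℝ) : ∫ x in Ioi c, f (x + d) = ∫ x in Ioi (c + d), f x := by
  have h := (measurePreserving_add_right volume d).setIntegral_preimage_emb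
    (measurableEmbedding_addRight d) f (Ioi (c + d))
  rwa [preimage_add_const_Ioi, add_sub_cancel_right] at h

theorem setIntegral_lt_abs_of_even {g : ℝ → ℝ} (hg : ∀ x, g (-x) = g x) {t : ℝ} (ht : 0 ≤ t) :
    ∫ y in {y : ℝ | t < |y|}, g y = 2 * ∫ y in Ioi t, g y := by
  have hfold : {y : ℝ | t < |y|}.indicator g = fun y ↦ (Ioi t).indicator g |y| := by
    ext y
    rcases abs_choice y with hy | hy <;>
      simp [indicator, hy, hg]
  rw [← integral_indicator (measurableSet_lt measurable_const measurable_abs), hfold,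
    integral_comp_abs, setIntegral_indicator measurableSet_Ioi, Ioi_inter_Ioi, max_eq_right ht]

section ConvexOn

variable {f : ℝ → ℝ} {S : Set ℝ} {x₀ y s : ℝ}

theorem ConvexOn.add_deriv_mul_le (hf : ConvexOn ℝ S f) (hx₀ : x₀ ∈ S) (hys : y + s ∈ S)
    (hd : DifferentiableAt ℝ f x₀) (hy : x₀ ≤ y) (hs : 0 ≤ s) :
    f y + deriv f x₀ * s ≤ f (y + s) := by
  rcases hs.eq_or_lt with rfl | hs
  · simp
  have hslope : deriv f x₀ ≤ slope f y (y + s) := by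
    rcases hy.eq_or_lt with rfl | hy
    · exact hf.deriv_le_slope hx₀ hys (by linarith) hd
    · have hyS : y ∈ S := hf.1.ordConnected.out hx₀ hys ⟨hy.le, by linarith⟩
      calc deriv f x₀ ≤ slope f x₀ y := hf.deriv_le_slope hx₀ hyS hy hd
        _ ≤ slope f y (y + s) := by
          simpa only [slope_def_field] using hf.slope_mono_adjacent hx₀ hys hy (by linarith)
  rw [slope_def_field, add_sub_cancel_left, le_div_iff₀ hs] at hslope
  linarith

theorem ConvexOn.nonneg_of_even_of_deriv_pos (hf : ConvexOn ℝ univ f)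
    (hd : DifferentiableAt ℝ f x₀) (heven : ∀ x, f (-x) = f x)
    (hpos : 0 < deriv f x₀) : 0 ≤ x₀ := by
  by_contra! hneg
  have h := hf.add_deriv_mul_le (mem_univ _) (mem_univ _) hd le_rfl (by linarith : 0 ≤ -2 * x₀)
  rw [show x₀ + -2 * x₀ = -x₀ by ring, heven] at h
  nlinarith

theorem ConvexOn.integrableOn_exp_neg_Ioi (hf : ConvexOn ℝ univ f)
    (hd : DifferentiableAt ℝ f x₀) (hpos : 0 < deriv f x₀) {a : ℝ} (ha : x₀ ≤ a) :
    IntegrableOn (fun y ↦ Real.exp (-f y)) (Ioi a) := by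
  have hcont : Continuous f := continuousOn_univ.1 (hf.continuousOn isOpen_univ)
  refine ((exp_neg_integrableOn_Ioi a hpos).const_mul (Real.exp (deriv f x₀ * a - f a))).mono'
    (by fun_prop) ((ae_restrict_iff' measurableSet_Ioi).2 (ae_of_all _ fun y hy ↦ ?_))
  have hgrowth := hf.add_deriv_mul_le (mem_univ _) (mem_univ _) hd ha (sub_nonneg.2 (le_of_lt hy))
  rw [add_sub_cancel] at hgrowth
  rw [Real.norm_of_nonneg (Real.exp_pos _).le, ← Real.exp_add]
  exact Real.exp_le_exp.2 (by linarith)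

theorem ConvexOn.setIntegral_exp_neg_Ioi_add_le (hf : ConvexOn ℝ univ f)
    (hd : DifferentiableAt ℝ f x₀) (hpos : 0 < deriv f x₀) {a : ℝ} (ha : x₀ ≤ a) (hs : 0 ≤ s) :
    ∫ y in Ioi (a + s), Real.exp (-f y) ≤
      Real.exp (-deriv f x₀ * s) * ∫ y in Ioi a, Real.exp (-f y) := by
  rw [← setIntegral_Ioi_comp_add_right, ← integral_const_mul]
  refine integral_mono_of_nonneg (ae_of_all _ fun y ↦ (Real.exp_pos _).le)
    ((hf.integrableOn_exp_neg_Ioi hd hpos ha).const_mul _)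
    ((ae_restrict_iff' measurableSet_Ioi).2 (ae_of_all _ fun y hy ↦ ?_))
  have hgrowth := hf.add_deriv_mul_le (mem_univ _) (mem_univ _) hd (ha.trans (le_of_lt hy)) hs
  dsimp only
  rw [← Real.exp_add]
  exact Real.exp_le_exp.2 (by linarith)

end ConvexOn

theorem tail_bound_logconcave_general
    (ρ : ℝ → ℝ) (hsym : ∀ x, ρ (-x) = ρ x) (hconv : ConvexOn ℝ Set.univ ρ)
    (t₀ α₀ : ℝ) (hα : deriv ρ t₀ = α₀) (hα₀ : 0 < α₀)
    (t₁ t₂ : ℝ) (h₁ : t₀ ≤ t₁) (h₂ : t₁ < t₂) :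
    (∫ y in {y : ℝ | t₂ < |y|}, Real.exp (-ρ y)) /
      (∫ y in {y : ℝ | t₁ < |y|}, Real.exp (-ρ y))
      ≤ Real.exp (-α₀ * (t₂ - t₁)) := by
  subst hα
  have hd : DifferentiableAt ℝ ρ t₀ := differentiableAt_of_deriv_ne_zero hα₀.ne'
  have ht₀ : 0 ≤ t₀ := hconv.nonneg_of_even_of_deriv_pos hd hsym hα₀
  have hshift := hconv.setIntegral_exp_neg_Ioi_add_le hd hα₀ h₁ (sub_nonneg.2 h₂.le)
  rw [add_sub_cancel] at hshift
  have heven : ∀ y, Real.exp (-ρ (-y)) = Real.exp (-ρ y) := fun y ↦ by rw [hsym]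
  rw [setIntegral_lt_abs_of_even heven (ht₀.trans h₁),
    setIntegral_lt_abs_of_even heven (by linarith)]
  refine div_le_of_le_mul₀ ?_ (Real.exp_pos _).le (by linarith)
  exact mul_nonneg zero_le_two (setIntegral_nonneg measurableSet_Ioi fun y _ ↦ (Real.exp_pos _).le)

theorem tail_bound_logconcave
    (ρ : ℝ → ℝ) (hsym : ∀ x, ρ (-x) = ρ x) (hconv : ConvexOn ℝ Set.univ ρ)
    (hcoer : Tendsto ρ (cocompact ℝ) atTop)
    (hdiff : Differentiable ℝ ρ)
    (t₀ α₀ : ℝ) (hα : deriv ρ t₀ = α₀) (hα₀ : 0 < α₀)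
    (t₁ t₂ : ℝ) (h₁ : t₀ ≤ t₁) (h₂ : t₁ < t₂) :
    (∫ y in {y : ℝ | t₂ < |y|}, Real.exp (-ρ y)) /
      (∫ y in {y : ℝ | t₁ < |y|}, Real.exp (-ρ y))
      ≤ Real.exp (-α₀ * (t₂ - t₁)) :=
  tail_bound_logconcave_general ρ hsym hconv t₀ α₀ hα hα₀ t₁ t₂ h₁ h₂
end

section
/- Consider the Student's t objective f(x) = Σ_{k=1}^N r·ln(1 + ‖w_k(x)‖²_{Q_k^{-1}}/r) where w₁(x) = x₁ − g₀ and w_k(x) = x_k − g_k(x_{k−1}) for continuous functions g_k. If {xᵛ} is a sequence with ‖xᵛ‖ → ∞, then there is a subsequence along which ‖w(xᵛ)‖ → ∞, where w(x) = (w₁(x),…,w_N(x)). Consequently the preimage F⁻¹(Λ) of any set Λ on which f ∘ w⁻¹-type values are bounded is bounded. -/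
/-!
Solving the residual relations for the states gives `x₁ = w₁ + g₀` and `x_k = w_k + g_k(x_{k-1})`.
A continuous map on a proper space sends bounded sets to bounded sets, so bounded residuals bound
`x₁`, then `x₂`, and so on down the cascade. Hence the residual map pulls bounded sets back to bounded
sets, i.e. it tends to infinity at infinity, and no subsequence needs to be extracted.
-/

open Bornology Set

theorem Continuous.isBounded_image {α β : Type*} [PseudoMetricSpace α] [ProperSpace α]
    [PseudoMetricSpace β] {f : α → β} (hf : Continuous f) {s : Set α} (hs : IsBounded s) :
    IsBounded (f '' s) :=
  (hs.isCompact_closure.image hf).isBounded.subset (image_mono subset_closure)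

theorem tendsto_cobounded_of_isBounded_preimage {α β : Type*} [Bornology α] [Bornology β]
    {f : α → β} (hf : ∀ s : Set β, IsBounded s → IsBounded (f ⁻¹' s)) :
    Filter.Tendsto f (cobounded α) (cobounded β) := fun s hs =>
  isBounded_compl_iff.1 <| preimage_compl (f := f) ▸ hf sᶜ (isBounded_compl_iff.2 hs)

def IsCascadeResidual {E : Type*} [Sub E] {N : ℕ} (g0 : E) (g : Fin N → E → E)
    (w : (Fin N → E) → Fin N → E) : Prop :=
  ∀ x (k : Fin N), w x k =
    if (k : ℕ) = 0 then x k - g0 else x k - g k (x ⟨(k : ℕ) - 1, Nat.lt_of_le_of_lt (Nat.sub_le _ _) k.isLt⟩)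

section Cascade

variable {E : Type*} [SeminormedAddCommGroup E] [ProperSpace E] {N : ℕ}
  {g0 : E} {g : Fin N → E → E} {w : (Fin N → E) → Fin N → E}

theorem isBounded_image_eval_preimage_of_cascade (hg : ∀ k, Continuous (g k))
    (hw : IsCascadeResidual g0 g w)
    {B : Set (Fin N → E)} (hB : IsBounded B) (k : ℕ) (hk : k < N) :
    IsBounded (Function.eval ⟨k, hk⟩ '' (w ⁻¹' B)) := by
  induction k with
  | zero =>
    refine ((hB.image_eval ⟨0, hk⟩).add (isBounded_singleton (x := g0))).subset ?_
    rintro _ ⟨x, hx, rfl⟩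
    have hx0 : x ⟨0, hk⟩ = w x ⟨0, hk⟩ + g0 := by simp [hw x]
    rw [Function.eval, hx0]
    exact add_mem_add (mem_image_of_mem _ hx) rfl
  | succ k ih =>
    have hprev := (hg ⟨k + 1, hk⟩).isBounded_image (ih (Nat.lt_of_succ_lt hk))
    refine ((hB.image_eval ⟨k + 1, hk⟩).add hprev).subset ?_
    rintro _ ⟨x, hx, rfl⟩
    have hxk : x ⟨k + 1, hk⟩ = w x ⟨k + 1, hk⟩ + g ⟨k + 1, hk⟩ (x ⟨k, Nat.lt_of_succ_lt hk⟩) := by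
      simp [hw x]
    rw [Function.eval, hxk]
    exact add_mem_add (mem_image_of_mem _ hx) (mem_image_of_mem _ (mem_image_of_mem _ hx))

theorem isBounded_preimage_of_cascade (hg : ∀ k, Continuous (g k))
    (hw : IsCascadeResidual g0 g w)
    {B : Set (Fin N → E)} (hB : IsBounded B) :
    IsBounded (w ⁻¹' B) :=
  forall_isBounded_image_eval_iff.1 fun k =>
    isBounded_image_eval_preimage_of_cascade hg hw hB k k.isLt

end Cascade

open Filter

/-- If the state sequence norm diverges, the process residual norm diverges
along a subsequence; consequently sublevel sets of the residual map are
bounded. -/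
theorem residual_coercive_cascade
    (N n : ℕ)
    (g0 : Fin n → ℝ) (g : Fin N → (Fin n → ℝ) → (Fin n → ℝ))
    (hg : ∀ k, Continuous (g k))
    (w : (Fin N → Fin n → ℝ) → (Fin N → Fin n → ℝ))
    (hw : ∀ x (k : Fin N), w x k =
      if (k : ℕ) = 0 then x k - g0 else x k - g k (x ⟨(k : ℕ) - 1, Nat.lt_of_le_of_lt (Nat.sub_le _ _) k.isLt⟩)) :
    (∀ x : ℕ → (Fin N → Fin n → ℝ),
      Tendsto (fun ν => ‖x ν‖) atTop atTop →
      ∃ φ : ℕ → ℕ, StrictMono φ ∧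
        Tendsto (fun ν => ‖w (x (φ ν))‖) atTop atTop) ∧
    (∀ M : ℝ, Bornology.IsBounded {x : Fin N → Fin n → ℝ | ‖w x‖ ≤ M}) := by
  have hbdd (B : Set (Fin N → Fin n → ℝ)) (hB : IsBounded B) : IsBounded (w ⁻¹' B) :=
    isBounded_preimage_of_cascade hg hw hB
  refine ⟨fun x hx => ⟨id, strictMono_id, ?_⟩, fun M => ?_⟩
  · exact tendsto_norm_cobounded_atTop.comp <|
      (tendsto_cobounded_of_isBounded_preimage hbdd).comp (tendsto_norm_atTop_iff_cobounded.1 hx)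
  · simpa only [preimage, Metric.mem_closedBall, dist_zero_right] using
      hbdd _ (Metric.isBounded_closedBall (x := 0) (r := M))
end

section
/- Let C be a symmetric block tridiagonal matrix with diagonal blocks C_k + H_k and off-diagonal blocks A_k, where C_k = (g_{k+1}')ᵀQ_{k+1}⁻¹g_{k+1}' + Q_k⁻¹ (with Q_{N+1} = I and g_{N+1}' = 0), A_k = −Q_k⁻¹g_k', and H_k symmetric positive semidefinite. Then C = GᵀQ⁻¹G + diag(H_k), where G is the block bidiagonal matrix with identity diagonal and subdiagonal blocks −g_k', and Q = diag(Q_k); hence C is symmetric positive definite. -/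
/-!
View a matrix indexed by `Fin N × Fin n` as an `N × N` matrix of `n × n` blocks (`Matrix.comp`).
Block `(i, j)` of `GᵀQ⁻¹G` is `∑ₖ (G k i)ᵀ Q_k⁻¹ (G k j)`, and since `G` is unit lower bidiagonal
only `k = i` and `k = i + 1` contribute, which produces exactly the tridiagonal blocks of `C`.
For definiteness: `Q⁻¹` is block diagonal with positive definite blocks, and `G` is block unit
lower triangular, so `det G = 1`; hence `GᵀQ⁻¹G ≻ 0`, and adding `diag(H_k) ⪰ 0` keeps it so.
-/

open Matrix

namespace Matrix

section BlockDiagonal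

variable {ι m R : Type*} [DecidableEq ι]

theorem isHermitian_comp_diagonal [AddMonoid R] [StarAddMonoid R] {B : ι → Matrix m m R}
    (hB : ∀ i, (B i).IsHermitian) : (comp ι ι m m R (diagonal B)).IsHermitian := by
  ext ⟨i, a⟩ ⟨j, b⟩
  rcases eq_or_ne i j with rfl | hij
  · simpa using (hB i).apply a b
  · simp [hij, hij.symm]

variable [Fintype ι] [Fintype m]

theorem dotProduct_comp_diagonal_mulVec [NonUnitalNonAssocSemiring R]
    (B : ι → Matrix m m R) (x y : ι × m → R) :
    x ⬝ᵥ (comp ι ι m m R (diagonal B) *ᵥ y) =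
      ∑ i, (fun a => x (i, a)) ⬝ᵥ (B i *ᵥ fun a => y (i, a)) := by
  simp only [dotProduct, mulVec, comp_apply, diagonal_apply, Fintype.sum_prod_type,
    Matrix.ite_apply, zero_apply, ite_mul, zero_mul, Finset.sum_ite_irrel,
    Finset.sum_const_zero, Finset.sum_ite_eq, Finset.mem_univ, if_true]

variable [Ring R] [PartialOrder R] [StarRing R]

theorem posSemidef_comp_diagonal [IsOrderedAddMonoid R] {B : ι → Matrix m m R}
    (hB : ∀ i, (B i).PosSemidef) : (comp ι ι m m R (diagonal B)).PosSemidef := by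
  refine posSemidef_iff_dotProduct_mulVec.2
    ⟨isHermitian_comp_diagonal fun i => (hB i).isHermitian, fun x => ?_⟩
  rw [dotProduct_comp_diagonal_mulVec]
  exact Finset.sum_nonneg fun i _ => (hB i).dotProduct_mulVec_nonneg _

theorem posDef_comp_diagonal [IsOrderedCancelAddMonoid R] {B : ι → Matrix m m R}
    (hB : ∀ i, (B i).PosDef) : (comp ι ι m m R (diagonal B)).PosDef := by
  refine posDef_iff_dotProduct_mulVec.2
    ⟨isHermitian_comp_diagonal fun i => (hB i).isHermitian, fun x hx => ?_⟩
  obtain ⟨⟨i, a⟩, hia⟩ := Function.ne_iff.1 hx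
  rw [dotProduct_comp_diagonal_mulVec]
  exact Finset.sum_pos' (fun j _ => (hB j).posSemidef.dotProduct_mulVec_nonneg _)
    ⟨i, Finset.mem_univ _, (hB i).dotProduct_mulVec_pos fun h => hia (congrFun h a)⟩

end BlockDiagonal

theorem det_comp_eq_one_of_lowerUnitriangular {ι m R : Type*} [Fintype ι] [DecidableEq ι]
    [LinearOrder ι] [Fintype m] [DecidableEq m] [CommRing R] (M : Matrix ι ι (Matrix m m R))
    (hdiag : ∀ i, M i i = 1) (hupper : ∀ i j, i < j → M i j = 0) :
    (comp ι ι m m R M).det = 1 := by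
  have hM : (comp ι ι m m R M).BlockTriangular (OrderDual.toDual ∘ Prod.fst) :=
    fun p q h => by simp [hupper _ _ (OrderDual.toDual_lt_toDual.1 h)]
  rw [hM.det]
  refine Finset.prod_eq_one fun k _ => ?_
  suffices (comp ι ι m m R M).toSquareBlock (OrderDual.toDual ∘ Prod.fst) k = 1 by simp [this]
  ext ⟨⟨i, a⟩, hp⟩ ⟨⟨j, b⟩, hq⟩
  obtain rfl : i = j := OrderDual.toDual.injective (hp.trans hq.symm)
  simp [toSquareBlock, toSquareBlockProp, toBlock, hdiag, one_apply, Prod.ext_iff]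

section Bidiagonal

variable {α : Type*} [Ring α]

def unitLowerBidiagonal (N : ℕ) (g : ℕ → α) : Matrix (Fin N) (Fin N) α :=
  of fun i j => if i = j then 1 else if (i : ℕ) = j + 1 then -g i else 0

theorem unitLowerBidiagonal_apply_eq_ite_val (N : ℕ) (g : ℕ → α) (i j : Fin N) :
    unitLowerBidiagonal N g i j =
      if (i : ℕ) = j then 1 else if (i : ℕ) = j + 1 then -g i else 0 := by
  simp [unitLowerBidiagonal, Fin.val_inj]

variable {m R : Type*} [Fintype m] [DecidableEq m] [CommRing R]

theorem det_comp_unitLowerBidiagonal (N : ℕ) (g : ℕ → Matrix m m R) :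
    (comp _ _ _ _ R (unitLowerBidiagonal N g)).det = 1 :=
  det_comp_eq_one_of_lowerUnitriangular _ (fun i => by simp [unitLowerBidiagonal])
    fun i j hij => by simp [unitLowerBidiagonal, hij.ne, show (i : ℕ) ≠ j + 1 by omega]

theorem unitLowerBidiagonal_gram_apply {N : ℕ} (g D : ℕ → Matrix m m R) (hgN : g N = 0)
    (i j : Fin N) :
    ((unitLowerBidiagonal N g)ᵀ.map (·ᵀ) * diagonal (fun k : Fin N => D k) *
        unitLowerBidiagonal N g) i j =
      if i = j then (g (i + 1))ᵀ * D (i + 1) * g (i + 1) + D i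
      else if (i : ℕ) = j + 1 then -(D i * g i)
      else if (j : ℕ) = i + 1 then -((g j)ᵀ * D j)
      else 0 := by
  set F : ℕ → Matrix m m R := fun k =>
    (if k = i then 1 else if k = i + 1 then -g k else 0)ᵀ * D k *
      (if k = j then 1 else if k = j + 1 then -g k else 0) with hF
  have hsum : ((unitLowerBidiagonal N g)ᵀ.map (·ᵀ) * diagonal (fun k : Fin N => D k) *
      unitLowerBidiagonal N g) i j = ∑ k ∈ Finset.range (N + 1), F k := by
    -- `g N = 0` kills the extra term `k = N`, so the range contains both `i` and `i + 1`.
    rw [Finset.sum_range_succ, ← Fin.sum_univ_eq_sum_range, mul_apply]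
    simp [mul_diagonal, unitLowerBidiagonal_apply_eq_ite_val, hF, hgN, i.2.ne', j.2.ne']
  rw [hsum, Finset.sum_eq_add_of_mem (i : ℕ) (i + 1) (by simp) (by simp) (by omega)
    fun k _ hk => by simp [hF, hk.1, hk.2]]
  rcases eq_or_ne i j with rfl | hij
  · simp [hF, add_comm]
  by_cases hsub : (i : ℕ) = j + 1
  · simp [hF, hij, hsub, show (j : ℕ) + 1 + 1 ≠ j by omega]
  by_cases hsup : (j : ℕ) = i + 1
  · simp [hF, hij, hsup, show (i : ℕ) ≠ i + 1 + 1 by omega]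
  · simp [hF, hij, hsub, hsup, Fin.val_ne_of_ne hij, Ne.symm hsup]

end Bidiagonal

end Matrix

/-- Indices are 0-based: the paper's convention `g'_{N+1} = 0` becomes `g' N = 0`. -/
theorem block_tridiagonal_decomposition_posdef_general
    (N n : ℕ)
    (Q : ℕ → Matrix (Fin n) (Fin n) ℝ) (hQ : ∀ k, k ≤ N → (Q k).PosDef)
    (g' : ℕ → Matrix (Fin n) (Fin n) ℝ) (hg'N : g' N = 0)
    (H : Fin N → Matrix (Fin n) (Fin n) ℝ) (hH : ∀ k, (H k).PosSemidef)
    (C G Qd Hd : Matrix (Fin N × Fin n) (Fin N × Fin n) ℝ)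
    (hC : ∀ p q : Fin N × Fin n, C p q =
      if p.1 = q.1 then
        ((g' ((p.1 : ℕ) + 1))ᵀ * (Q ((p.1 : ℕ) + 1))⁻¹ * g' ((p.1 : ℕ) + 1)
          + (Q (p.1 : ℕ))⁻¹ + H p.1) p.2 q.2
      else if (p.1 : ℕ) = (q.1 : ℕ) + 1 then
        (-((Q (p.1 : ℕ))⁻¹ * g' (p.1 : ℕ))) p.2 q.2
      else if (q.1 : ℕ) = (p.1 : ℕ) + 1 then
        (-((g' (q.1 : ℕ))ᵀ * (Q (q.1 : ℕ))⁻¹)) p.2 q.2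
      else 0)
    (hG : ∀ p q : Fin N × Fin n, G p q =
      if p.1 = q.1 then (if p.2 = q.2 then (1 : ℝ) else 0)
      else if (p.1 : ℕ) = (q.1 : ℕ) + 1 then -(g' (p.1 : ℕ) p.2 q.2)
      else 0)
    (hQd : ∀ p q : Fin N × Fin n, Qd p q =
      if p.1 = q.1 then (Q (p.1 : ℕ))⁻¹ p.2 q.2 else 0)
    (hHd : ∀ p q : Fin N × Fin n, Hd p q =
      if p.1 = q.1 then H p.1 p.2 q.2 else 0) :
    C = Gᵀ * Qd * G + Hd ∧ C.PosDef := by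
  have hGb : G = comp _ _ _ _ ℝ (unitLowerBidiagonal N g') := by
    ext ⟨i, a⟩ ⟨j, b⟩
    by_cases hij : i = j <;> simp [hG, unitLowerBidiagonal, one_apply, hij, Matrix.ite_apply]
  have hQdb : Qd = comp _ _ _ _ ℝ (diagonal fun k : Fin N => (Q k)⁻¹) := by
    ext ⟨i, a⟩ ⟨j, b⟩
    by_cases hij : i = j <;> simp [hQd, hij]
  have hHdb : Hd = comp _ _ _ _ ℝ (diagonal H) := by
    ext ⟨i, a⟩ ⟨j, b⟩
    by_cases hij : i = j <;> simp [hHd, hij]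
  have hdecomp : C = Gᵀ * Qd * G + Hd := by
    have hblocks : Gᵀ * Qd * G + Hd = comp _ _ _ _ ℝ ((unitLowerBidiagonal N g')ᵀ.map (·ᵀ) *
        diagonal (fun k : Fin N => (Q k)⁻¹) * unitLowerBidiagonal N g' + diagonal H) := by
      rw [hGb, hQdb, hHdb, transpose_comp]
      simp only [← compRingEquiv_apply, map_add, map_mul]
    ext ⟨i, a⟩ ⟨j, b⟩
    rw [hblocks, comp_apply, Matrix.add_apply,
      unitLowerBidiagonal_gram_apply g' (fun k => (Q k)⁻¹) hg'N, hC]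
    by_cases hij : i = j <;> simp [hij, Matrix.ite_apply]
  refine ⟨hdecomp, ?_⟩
  have hQdPD : Qd.PosDef := hQdb ▸ posDef_comp_diagonal fun k => (hQ k k.2.le).inv
  have hHdPSD : Hd.PosSemidef := hHdb ▸ posSemidef_comp_diagonal hH
  have hGinj : Function.Injective G.mulVec := by
    rw [mulVec_injective_iff_isUnit, isUnit_iff_isUnit_det, hGb, det_comp_unitLowerBidiagonal]
    exact isUnit_one
  rw [hdecomp, ← conjTranspose_eq_transpose_of_trivial]
  exact (hQdPD.conjTranspose_mul_mul_same hGinj).add_posSemidef hHdPSD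

/-- The block tridiagonal Gauss-Newton matrix C equals GᵀQ⁻¹G + diag(H_k),
hence is symmetric positive definite. Indices are 0-based; the conventions
Q_{N+1} = I and g'_{N+1} = 0 of the paper become Q N = 1 and g' N = 0. -/
theorem block_tridiagonal_decomposition_posdef
    (N n : ℕ)
    (Q : ℕ → Matrix (Fin n) (Fin n) ℝ) (hQ : ∀ k, k ≤ N → (Q k).PosDef)
    (hQN : Q N = 1)
    (g' : ℕ → Matrix (Fin n) (Fin n) ℝ) (hg'N : g' N = 0)
    (H : Fin N → Matrix (Fin n) (Fin n) ℝ) (hH : ∀ k, (H k).PosSemidef)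
    (C G Qd Hd : Matrix (Fin N × Fin n) (Fin N × Fin n) ℝ)
    (hC : ∀ p q : Fin N × Fin n, C p q =
      if p.1 = q.1 then
        ((g' ((p.1 : ℕ) + 1))ᵀ * (Q ((p.1 : ℕ) + 1))⁻¹ * g' ((p.1 : ℕ) + 1)
          + (Q (p.1 : ℕ))⁻¹ + H p.1) p.2 q.2
      else if (p.1 : ℕ) = (q.1 : ℕ) + 1 then
        (-((Q (p.1 : ℕ))⁻¹ * g' (p.1 : ℕ))) p.2 q.2
      else if (q.1 : ℕ) = (p.1 : ℕ) + 1 then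
        (-((g' (q.1 : ℕ))ᵀ * (Q (q.1 : ℕ))⁻¹)) p.2 q.2
      else 0)
    (hG : ∀ p q : Fin N × Fin n, G p q =
      if p.1 = q.1 then (if p.2 = q.2 then (1 : ℝ) else 0)
      else if (p.1 : ℕ) = (q.1 : ℕ) + 1 then -(g' (p.1 : ℕ) p.2 q.2)
      else 0)
    (hQd : ∀ p q : Fin N × Fin n, Qd p q =
      if p.1 = q.1 then (Q (p.1 : ℕ))⁻¹ p.2 q.2 else 0)
    (hHd : ∀ p q : Fin N × Fin n, Hd p q =
      if p.1 = q.1 then H p.1 p.2 q.2 else 0) :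
    C = Gᵀ * Qd * G + Hd ∧ C.PosDef :=
  block_tridiagonal_decomposition_posdef_general N n Q hQ g' hg'N H hH C G Qd Hd hC hG hQd hHd
end
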